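/- arXiv:2106.14414 — 3 statements merged into one kernel-verified Lean document; each statement's English description precedes it below -/
import Mathlib

section
/- Let (L, τ) be a Hausdorff locally solid Riesz space, I an admissible ideal on ℕ, (t_n) a weighted sequence of real numbers, and x = (x_n) a sequence in L. Let V be a solid τ-neighborhood of zero such that V + V + U is again a solid τ-neighborhood of zero for every solid τ-neighborhood U of zero. If in addition V is τ-bounded, then the rough weighted I_τ-limit set WI_τ-LIM^V x is a τ-bounded subset of L. -/
/-!
Solid sets are balanced, so everything happens in a real topological vector space with a
balanced bounded `V`. If `a` and `b` are rough limits and `W` is a balanced neighbourhood of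
zero, the two exceptional sets lie in the ideal and so miss a common index `n`; then
`t n • (b - a) ∈ (V + W) - (V + W) = V + V + (W + W)`, and since `δ / t n ≤ 1` the balanced set
`V + V + (W + W)` also contains `δ • (b - a)`. Letting `W` shrink, `δ • (b - a) ∈ closure (V + V)`,
so the limit set lies in the bounded set `a + δ⁻¹ • closure (V + V)`.
-/

open Topology Filter Set Pointwise

/-- An admissible ideal on ℕ: contains all finite sets, closed under subsets
and finite unions, and does not contain ℕ itself. -/
def IsAdmissibleIdeal (I : Set (Set ℕ)) : Prop :=
  (∀ A : Set ℕ, A.Finite → A ∈ I) ∧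
  (∀ A B : Set ℕ, A ∈ I → B ⊆ A → B ∈ I) ∧
  (∀ A B : Set ℕ, A ∈ I → B ∈ I → A ∪ B ∈ I) ∧
  (Set.univ : Set ℕ) ∉ I

/-- A set `S` in a lattice-ordered group is solid if `|a| ≤ |b|` and `b ∈ S` imply `a ∈ S`,
where `|a| = a ⊔ -a`. -/
def IsSolidSet {L : Type*} [Lattice L] [AddCommGroup L] (S : Set L) : Prop :=
  ∀ a b : L, a ⊔ -a ≤ b ⊔ -b → b ∈ S → a ∈ S

/-- The rough weighted `I`-τ-limit set of the sequence `x`, with weights `t` and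
degree of roughness the neighborhood `V` of zero. -/
def WLimSet {L : Type*} [AddCommGroup L] [Module ℝ L] [TopologicalSpace L]
    (I : Set (Set ℕ)) (t : ℕ → ℝ) (x : ℕ → L) (V : Set L) : Set L :=
  {x' | ∀ U ∈ 𝓝 (0 : L), {n : ℕ | t n • (x n - x') ∉ V + U} ∈ I}

/-- The set of weighted `I`-τ-cluster points of the sequence `x` with weights `t`. -/
def WClusterSet {L : Type*} [AddCommGroup L] [Module ℝ L] [TopologicalSpace L]
    (I : Set (Set ℕ)) (t : ℕ → ℝ) (x : ℕ → L) : Set L :=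
  {c | ∀ U ∈ 𝓝 (0 : L), {n : ℕ | t n • (x n - c) ∈ U} ∉ I}

open Bornology

section Solid

variable {L : Type*} [AddCommGroup L] [Lattice L] [AddLeftMono L] [Module ℝ L] [PosSMulMono ℝ L]

theorem abs_smul_le_abs_of_abs_le_one {c : ℝ} (hc : |c| ≤ 1) (a : L) : |c • a| ≤ |a| := by
  wlog hc₀ : 0 ≤ c generalizing c
  · simpa only [neg_smul, abs_neg] using this (c := -c) (by rwa [abs_neg]) (by linarith)
  have hca : c • |a| ≤ |a| := by
    have := smul_nonneg (sub_nonneg.2 (le_of_abs_le hc)) (abs_nonneg a)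
    rwa [sub_smul, one_smul, sub_nonneg] at this
  refine sup_le ((smul_le_smul_of_nonneg_left (le_abs_self a) hc₀).trans hca) ?_
  rw [← smul_neg]
  exact (smul_le_smul_of_nonneg_left (neg_le_abs a) hc₀).trans hca

theorem IsSolidSet.balanced {S : Set L} (hS : IsSolidSet S) : Balanced ℝ S := by
  rintro c hc _ ⟨a, ha, rfl⟩
  exact hS _ _ (abs_smul_le_abs_of_abs_le_one (by rwa [← Real.norm_eq_abs]) a) ha

end Solid

theorem IsAdmissibleIdeal.exists_notMem_of_mem {I : Set (Set ℕ)} (hI : IsAdmissibleIdeal I)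
    {A B : Set ℕ} (hA : A ∈ I) (hB : B ∈ I) : ∃ n, n ∉ A ∧ n ∉ B := by
  by_contra! h
  exact hI.2.2.2 (eq_univ_of_forall (fun n => (em (n ∈ A)).imp_right (h n)) ▸ hI.2.2.1 A B hA hB)

theorem mem_closure_of_forall_mem_add_nhds {G : Type*} [AddCommGroup G] [TopologicalSpace G]
    [IsTopologicalAddGroup G] {s : Set G} {a : G} (h : ∀ U ∈ 𝓝 (0 : G), a ∈ s + U) :
    a ∈ closure s := by
  refine mem_closure_iff_nhds_zero.2 fun U hU => ?_
  obtain ⟨y, hy, u, hu, rfl⟩ := h (-U) (neg_mem_nhds_zero G hU)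
  exact ⟨y, hy, by simpa using hu⟩

section TopologicalVectorSpace

variable {E : Type*} [AddCommGroup E] [Module ℝ E] [TopologicalSpace E] [ContinuousSMul ℝ E]

theorem isVonNBounded_iff_exists_pos_subset_smul {s : Set E} :
    IsVonNBounded ℝ s ↔ ∀ U ∈ 𝓝 (0 : E), ∃ lam : ℝ, 0 < lam ∧ s ⊆ lam • U := by
  refine ⟨fun h U hU => ?_, fun h => ?_⟩
  · obtain ⟨r, hr, hs⟩ := (h hU).exists_pos
    exact ⟨r, hr, hs r (by rw [Real.norm_of_nonneg hr.le])⟩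
  · rw [(nhds_basis_balanced ℝ E).isVonNBounded_iff]
    rintro U ⟨hU, hUb⟩
    obtain ⟨lam, hlam, hs⟩ := h U hU
    exact absorbs_iff_norm.2 ⟨lam, fun c hc =>
      hs.trans (hUb.smul_mono (by rwa [Real.norm_of_nonneg hlam.le]))⟩

theorem Bornology.IsVonNBounded.smul_set {s : Set E} (hs : IsVonNBounded ℝ s) (c : ℝ) :
    IsVonNBounded ℝ (c • s) := by
  rw [← Set.image_smul]
  exact hs.image (c • ContinuousLinearMap.id ℝ E)

variable [IsTopologicalAddGroup E]

theorem smul_sub_mem_closure_of_mem_WLimSet {I : Set (Set ℕ)} (hI : IsAdmissibleIdeal I)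
    {t : ℕ → ℝ} {δ : ℝ} (hδ : 0 < δ) (ht : ∀ n, δ ≤ t n) {x : ℕ → E} {V : Set E}
    (hV : Balanced ℝ V) {a b : E} (ha : a ∈ WLimSet I t x V) (hb : b ∈ WLimSet I t x V) :
    δ • (b - a) ∈ closure (V + V) := by
  refine mem_closure_of_forall_mem_add_nhds fun U hU => ?_
  obtain ⟨U', hU', hU'U⟩ := exists_nhds_zero_half hU
  obtain ⟨W, ⟨hW, hWb⟩, hWU'⟩ := (nhds_basis_balanced ℝ E).mem_iff.1 hU'
  obtain ⟨n, hna, hnb⟩ := hI.exists_notMem_of_mem (ha W hW) (hb W hW)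
  simp only [mem_ofPred_eq, not_not] at hna hnb
  have htn : 0 < t n := hδ.trans_le (ht n)
  have hdiff : t n • (b - a) ∈ V + V + (W + W) := by
    have := add_mem_add hna ((hV.add hWb).neg_mem_iff.2 hnb)
    rwa [add_add_add_comm, ← sub_eq_add_neg, ← smul_sub, sub_sub_sub_cancel_left] at this
  have hδdiff : δ • (b - a) ∈ V + V + (W + W) := by
    rw [← div_mul_cancel₀ δ htn.ne', mul_smul]
    refine ((hV.add hV).add (hWb.add hWb)).smul_mem ?_ hdiff
    rw [Real.norm_of_nonneg (by positivity)]
    exact div_le_one_of_le₀ (ht n) htn.le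
  refine add_subset_add_left ?_ hδdiff
  rintro _ ⟨v, hv, w, hw, rfl⟩
  exact hU'U v (hWU' hv) w (hWU' hw)

end TopologicalVectorSpace

theorem WLimSet_tauBounded_general
    {L : Type*} [AddCommGroup L] [Lattice L] [Module ℝ L]
    [CovariantClass L L (· + ·) (· ≤ ·)] [PosSMulMono ℝ L]
    [TopologicalSpace L] [IsTopologicalAddGroup L] [ContinuousSMul ℝ L] [T2Space L]
    {I : Set (Set ℕ)} (hI : IsAdmissibleIdeal I)
    {t : ℕ → ℝ} (ht : ∃ δ : ℝ, 0 < δ ∧ ∀ n, δ < t n)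
    (x : ℕ → L) {V : Set L} (hVsolid : IsSolidSet V)
    (hVbdd : ∀ U ∈ 𝓝 (0 : L), ∃ lam : ℝ, 0 < lam ∧ V ⊆ lam • U) :
    ∀ U ∈ 𝓝 (0 : L), ∃ lam : ℝ, 0 < lam ∧ WLimSet I t x V ⊆ lam • U := by
  obtain ⟨δ, hδ, ht⟩ := ht
  refine isVonNBounded_iff_exists_pos_subset_smul.1 ?_
  rcases (WLimSet I t x V).eq_empty_or_nonempty with hempty | ⟨a, ha⟩
  · exact hempty ▸ isVonNBounded_empty ℝ L
  have hVbounded : IsVonNBounded ℝ V := isVonNBounded_iff_exists_pos_subset_smul.2 hVbdd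
  refine (((hVbounded.add hVbounded).closure.smul_set δ⁻¹).vadd a).subset fun b hb => ?_
  rw [mem_vadd_set_iff_neg_vadd_mem, vadd_eq_add, neg_add_eq_sub,
    mem_smul_set_iff_inv_smul_mem₀ (inv_ne_zero hδ.ne'), inv_inv]
  exact smul_sub_mem_closure_of_mem_WLimSet hI hδ (fun n => (ht n).le) hVsolid.balanced ha hb

/-- In a Hausdorff locally solid Riesz space, if `V` is a τ-bounded solid
neighborhood of zero such that `V + V + U` is a solid neighborhood of zero for every solid
neighborhood `U` of zero, then the rough weighted `I`-τ-limit set is τ-bounded. -/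
theorem WLimSet_tauBounded
    {L : Type*} [AddCommGroup L] [Lattice L] [Module ℝ L]
    [CovariantClass L L (· + ·) (· ≤ ·)] [PosSMulMono ℝ L]
    [TopologicalSpace L] [IsTopologicalAddGroup L] [ContinuousSMul ℝ L] [T2Space L]
    (hsolid : ∀ U ∈ 𝓝 (0 : L), ∃ W ∈ 𝓝 (0 : L), W ⊆ U ∧ IsSolidSet W)
    {I : Set (Set ℕ)} (hI : IsAdmissibleIdeal I)
    {t : ℕ → ℝ} (ht : ∃ δ : ℝ, 0 < δ ∧ ∀ n, δ < t n)
    (x : ℕ → L) {V : Set L} (hV : V ∈ 𝓝 (0 : L)) (hVsolid : IsSolidSet V)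
    (hVVU : ∀ U ∈ 𝓝 (0 : L), IsSolidSet U →
      (V + V + U ∈ 𝓝 (0 : L) ∧ IsSolidSet (V + V + U)))
    (hVbdd : ∀ U ∈ 𝓝 (0 : L), ∃ lam : ℝ, 0 < lam ∧ V ⊆ lam • U) :
    ∀ U ∈ 𝓝 (0 : L), ∃ lam : ℝ, 0 < lam ∧ WLimSet I t x V ⊆ lam • U :=
  WLimSet_tauBounded_general hI ht x hVsolid hVbdd
end

section
/- Let (L, τ) be a Hausdorff locally solid Riesz space, I an admissible ideal on ℕ, (t_n) a weighted sequence of real numbers, and x = (x_n) a sequence in L. Let V be a solid τ-neighborhood of zero such that V + U is again a solid τ-neighborhood of zero for every solid τ-neighborhood U of zero. If x* ∈ WI_τ-LIM^V x and c is a weighted I_τ-cluster point of x, then (inf_{n∈ℕ} t_n) · (x* − c) ∈ closure(V); equivalently x* − c lies in (1/inf_n t_n) · closure(V). -/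
open Topology Filter Set Pointwise

/-! Some index `n` outside the exceptional set of `x*` is a cluster index of `c`: there
`tₙ(xₙ - c)` is small and `tₙ(xₙ - x*)` lies in `V` up to a small error, so `tₙ(x* - c)` lies in
`V + W` for an arbitrarily small solid neighborhood `W`. As `V + W` is solid and
`0 ≤ inf t ≤ tₙ`, lowering the weight keeps `(inf t)(x* - c)` in `V + W`. -/

section LatticeOrderedModule

variable {𝕜 L : Type*} [Field 𝕜] [LinearOrder 𝕜] [IsStrictOrderedRing 𝕜]
  [Lattice L] [AddCommGroup L] [Module 𝕜 L] [PosSMulMono 𝕜 L]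

theorem abs_smul_of_pos {r : 𝕜} (hr : 0 < r) (a : L) : |r • a| = r • |a| := by
  rw [abs, abs, ← smul_neg]
  exact ((OrderIso.smulRight hr).map_sup a (-a)).symm

theorem abs_smul_le_abs_smul [AddLeftMono L] {r s : 𝕜} (hr : 0 ≤ r) (hrs : r ≤ s) (a : L) :
    |r • a| ≤ |s • a| := by
  rcases hr.eq_or_lt with rfl | hr
  · rw [zero_smul, abs_zero]
    exact abs_nonneg _
  calc |r • a| = r • |a| := abs_smul_of_pos hr a
    _ ≤ s • |a| := by
      rw [← sub_nonneg, ← sub_smul]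
      exact smul_nonneg (sub_nonneg.2 hrs) (abs_nonneg a)
    _ = |s • a| := (abs_smul_of_pos (hr.trans_le hrs) a).symm

end LatticeOrderedModule

namespace IsSolidSet

variable {L : Type*} [Lattice L] [AddCommGroup L] {S : Set L}

theorem neg_mem (hS : IsSolidSet S) {a : L} (ha : a ∈ S) : -a ∈ S :=
  hS (-a) a (by rw [neg_neg, sup_comm]) ha

theorem smul_mem_of_le {𝕜 : Type*} [Field 𝕜] [LinearOrder 𝕜] [IsStrictOrderedRing 𝕜]
    [Module 𝕜 L] [PosSMulMono 𝕜 L] [AddLeftMono L] (hS : IsSolidSet S) {r s : 𝕜}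
    (hr : 0 ≤ r) (hrs : r ≤ s) {a : L} (ha : s • a ∈ S) : r • a ∈ S :=
  hS _ _ (abs_smul_le_abs_smul hr hrs a) ha

end IsSolidSet

theorem IsAdmissibleIdeal.exists_mem_not_mem {I : Set (Set ℕ)} (hI : IsAdmissibleIdeal I)
    {A B : Set ℕ} (hA : A ∈ I) (hB : B ∉ I) : ∃ n ∈ B, n ∉ A :=
  Set.not_subset.1 fun hBA => hB (hI.2.1 A B hA hBA)

theorem mem_closure_of_forall_mem_add_nhds_zero {G : Type*} [AddCommGroup G] [TopologicalSpace G]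
    [IsTopologicalAddGroup G] {s : Set G} {z : G} (h : ∀ U ∈ 𝓝 (0 : G), z ∈ s + U) :
    z ∈ closure s := by
  rw [mem_closure_iff_nhds_zero]
  intro U hU
  obtain ⟨v, hv, w, hw, rfl⟩ := h (-U) (neg_mem_nhds_zero G hU)
  refine ⟨v, hv, ?_⟩
  rw [show v - (v + w) = -w from sub_add_cancel_left v w]
  exact hw

theorem exists_solid_nhds_zero_add_subset {L : Type*} [AddCommGroup L] [Lattice L]
    [TopologicalSpace L] [IsTopologicalAddGroup L]
    (hsolid : ∀ U ∈ 𝓝 (0 : L), ∃ W ∈ 𝓝 (0 : L), W ⊆ U ∧ IsSolidSet W)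
    {U : Set L} (hU : U ∈ 𝓝 (0 : L)) : ∃ W ∈ 𝓝 (0 : L), IsSolidSet W ∧ W + W ⊆ U := by
  obtain ⟨U', hU', hU'U⟩ := exists_nhds_zero_half hU
  obtain ⟨W, hW, hWU', hWsolid⟩ := hsolid U' hU'
  exact ⟨W, hW, hWsolid, by rintro _ ⟨a, ha, b, hb, rfl⟩; exact hU'U a (hWU' ha) b (hWU' hb)⟩

theorem exists_smul_sub_mem_add_add {L : Type*} [AddCommGroup L] [Lattice L] [Module ℝ L]
    [TopologicalSpace L] {I : Set (Set ℕ)} (hI : IsAdmissibleIdeal I) {t : ℕ → ℝ}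
    {x : ℕ → L} {V U : Set L} {xs c : L} (hxs : xs ∈ WLimSet I t x V)
    (hc : c ∈ WClusterSet I t x) (hU : U ∈ 𝓝 (0 : L)) (hVU : IsSolidSet (V + U)) :
    ∃ n, t n • (xs - c) ∈ V + U + U := by
  obtain ⟨n, hnc, hnxs⟩ := hI.exists_mem_not_mem (hxs U hU) (hc U hU)
  refine ⟨n, ?_⟩
  have hsplit : t n • (xs - c) = -(t n • (x n - xs)) + t n • (x n - c) := by
    rw [← smul_neg, ← smul_add]
    congr 1
    abel
  rw [hsplit]
  exact add_mem_add (hVU.neg_mem (not_not.1 hnxs)) hnc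

theorem WLimSet_sub_cluster_mem_closure_general
    {L : Type*} [AddCommGroup L] [Lattice L] [Module ℝ L]
    [CovariantClass L L (· + ·) (· ≤ ·)] [PosSMulMono ℝ L]
    [TopologicalSpace L] [IsTopologicalAddGroup L]
    (hsolid : ∀ U ∈ 𝓝 (0 : L), ∃ W ∈ 𝓝 (0 : L), W ⊆ U ∧ IsSolidSet W)
    {I : Set (Set ℕ)} (hI : IsAdmissibleIdeal I)
    {t : ℕ → ℝ} (ht : ∃ δ : ℝ, 0 < δ ∧ ∀ n, δ < t n)
    (x : ℕ → L) {V : Set L}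
    (hVU : ∀ U ∈ 𝓝 (0 : L), IsSolidSet U → (V + U ∈ 𝓝 (0 : L) ∧ IsSolidSet (V + U)))
    {xs c : L} (hxs : xs ∈ WLimSet I t x V) (hc : c ∈ WClusterSet I t x) :
    (⨅ n : ℕ, t n) • (xs - c) ∈ closure V := by
  obtain ⟨δ, hδ, hδt⟩ := ht
  have hinf_nonneg : 0 ≤ ⨅ n, t n := le_ciInf fun n => hδ.le.trans (hδt n).le
  have hinf_le : ∀ n, ⨅ n, t n ≤ t n := ciInf_le ⟨δ, Set.forall_mem_range.2 fun n => (hδt n).le⟩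
  refine mem_closure_of_forall_mem_add_nhds_zero fun U hU => ?_
  obtain ⟨W, hW, hWU, hWsolid⟩ := hsolid U hU
  obtain ⟨W', hW', hW'solid, hW'W⟩ := exists_solid_nhds_zero_add_subset hsolid hW
  obtain ⟨n, hn⟩ := exists_smul_sub_mem_add_add hI hxs hc hW' (hVU W' hW' hW'solid).2
  rw [add_assoc] at hn
  have hnW : t n • (xs - c) ∈ V + W := add_subset_add_left hW'W hn
  exact add_subset_add_left hWU <|
    (hVU W hW hWsolid).2.smul_mem_of_le hinf_nonneg (hinf_le n) hnW

/-- In a Hausdorff locally solid Riesz space, if `V` is a solid neighborhood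
of zero such that `V + U` is a solid neighborhood of zero for every solid neighborhood `U`
of zero, `x*` is a rough weighted `I`-τ-limit point of `x` with roughness `V` and `c` is a
weighted `I`-τ-cluster point of `x`, then `(⨅ n, t n) • (x* - c) ∈ closure V`. -/
theorem WLimSet_sub_cluster_mem_closure
    {L : Type*} [AddCommGroup L] [Lattice L] [Module ℝ L]
    [CovariantClass L L (· + ·) (· ≤ ·)] [PosSMulMono ℝ L]
    [TopologicalSpace L] [IsTopologicalAddGroup L] [ContinuousSMul ℝ L] [T2Space L]
    (hsolid : ∀ U ∈ 𝓝 (0 : L), ∃ W ∈ 𝓝 (0 : L), W ⊆ U ∧ IsSolidSet W)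
    {I : Set (Set ℕ)} (hI : IsAdmissibleIdeal I)
    {t : ℕ → ℝ} (ht : ∃ δ : ℝ, 0 < δ ∧ ∀ n, δ < t n)
    (x : ℕ → L) {V : Set L} (hV : V ∈ 𝓝 (0 : L)) (hVsolid : IsSolidSet V)
    (hVU : ∀ U ∈ 𝓝 (0 : L), IsSolidSet U → (V + U ∈ 𝓝 (0 : L) ∧ IsSolidSet (V + U)))
    {xs c : L} (hxs : xs ∈ WLimSet I t x V) (hc : c ∈ WClusterSet I t x) :
    (⨅ n : ℕ, t n) • (xs - c) ∈ closure V :=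
  WLimSet_sub_cluster_mem_closure_general hsolid hI ht x hVU hxs hc
end

section
/- Work in ℝ² with the Euclidean norm, coordinatewise order, and the norm topology, and let I_s = {A ⊆ ℕ : Σ_{a∈A} 1/a < ∞} be the summability ideal. Define t_n = √n for all n ≥ 1 and x_n = (2 + 1/n, 1 + 3/n) if n is not a perfect square, x_n = (5, −5) if n is a perfect square. Then: (i) for every neighborhood V of zero in ℝ² and every μ > 0, the point (2,1) belongs to the rough weighted I_τ-limit set of x with degree of roughness μ·V (so this limit set is nonempty); but (ii) the sequence x is not weighted I_τ-bounded, i.e., there exists a neighborhood U of zero such that for every λ > 0 the set {n ∈ ℕ : λ t_n x_n ∉ U} does not belong to I_s. -/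
/-! Off the perfect squares, `√n • (x n - (2, 1)) = (√n)⁻¹ • (1, 3) → 0`, and the squares lie
in the ideal because `∑ 1 / k² < ∞`; so the exceptional set in (i) is covered by the squares and
a finite set. In (ii), `‖x n‖ ≥ 2` forces `‖(λ √n) • x n‖ → ∞`, so the exceptional set for the
unit ball is cofinite, and a cofinite set is not in the ideal since the harmonic series diverges. -/

open Topology Filter Set Pointwise

/-- The summability ideal `{A ⊆ ℕ : Σ_{a ∈ A} 1/a < ∞}`. -/
def summabilityIdeal : Set (Set ℕ) :=
  {A | Summable fun a : A => (1 : ℝ) / (a : ℝ)}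

/-- The sequence of Example 6: `x n = (5, -5)` if `n` is a perfect square and
`x n = (2 + 1/n, 1 + 3/n)` otherwise. -/
noncomputable def xSeq16 : ℕ → ℝ × ℝ := fun n =>
  if IsSquare n then (5, -5) else (2 + 1 / (n : ℝ), 1 + 3 / (n : ℝ))

lemma mem_summabilityIdeal_iff_summable_indicator {A : Set ℕ} :
    A ∈ summabilityIdeal ↔ Summable (A.indicator fun n : ℕ => (1 : ℝ) / n) :=
  summable_subtype_iff_indicator (f := fun n : ℕ => (1 : ℝ) / n)

lemma mem_summabilityIdeal_of_subset {A B : Set ℕ} (hBA : B ⊆ A) (hA : A ∈ summabilityIdeal) :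
    B ∈ summabilityIdeal := by
  have hA' : Summable fun a : A => (1 : ℝ) / (a : ℝ) := hA
  have hB := hA'.comp_injective (inclusion_injective hBA)
  exact hB

lemma union_mem_summabilityIdeal {A B : Set ℕ} (hA : A ∈ summabilityIdeal)
    (hB : B ∈ summabilityIdeal) : A ∪ B ∈ summabilityIdeal := by
  have hBA : B \ A ∈ summabilityIdeal := mem_summabilityIdeal_of_subset sdiff_subset hB
  rw [mem_summabilityIdeal_iff_summable_indicator] at hA hBA ⊢
  rw [← union_sdiff_self, indicator_union_of_disjoint disjoint_sdiff_right]
  exact hA.add hBA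

lemma Set.Finite.mem_summabilityIdeal {A : Set ℕ} (hA : A.Finite) : A ∈ summabilityIdeal :=
  hA.summable fun n : ℕ => (1 : ℝ) / n

lemma setOf_isSquare_mem_summabilityIdeal : {n : ℕ | IsSquare n} ∈ summabilityIdeal := by
  have hsquares : {n : ℕ | IsSquare n} = range fun k : ℕ => k * k := by
    ext n
    exact exists_congr fun _ => eq_comm
  have hinj : Function.Injective fun k : ℕ => k * k := fun _ _ => Nat.mul_self_inj.mp
  show Summable _
  rw [hsquares, ← (Equiv.ofInjective _ hinj).summable_iff]
  convert Real.summable_one_div_nat_pow.mpr one_lt_two using 2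
  simp [sq]

lemma notMem_summabilityIdeal_of_finite_compl {A : Set ℕ} (hA : Aᶜ.Finite) :
    A ∉ summabilityIdeal := by
  intro hA'
  have huniv := union_mem_summabilityIdeal hA' hA.mem_summabilityIdeal
  rw [union_compl_self, mem_summabilityIdeal_iff_summable_indicator, indicator_univ] at huniv
  exact Real.not_summable_one_div_natCast huniv

lemma Filter.Tendsto.finite_setOf_notMem {E : Type*} [TopologicalSpace E] {y : ℕ → E} {a : E}
    (hy : Tendsto y atTop (𝓝 a)) {U : Set E} (hU : U ∈ 𝓝 a) : {n | y n ∉ U}.Finite :=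
  eventually_cofinite.mp (Nat.cofinite_eq_atTop ▸ hy.eventually_mem hU)

lemma tendsto_inv_sqrt_smul {E : Type*} [AddCommGroup E] [Module ℝ E] [TopologicalSpace E]
    [ContinuousSMul ℝ E] (v : E) :
    Tendsto (fun n : ℕ => (√n)⁻¹ • v) atTop (𝓝 0) := by
  have h := (tendsto_inv_atTop_zero.comp
    (Real.tendsto_sqrt_atTop.comp tendsto_natCast_atTop_atTop)).smul_const v
  rwa [zero_smul] at h

lemma sqrt_smul_xSeq16_sub_of_not_isSquare {n : ℕ} (hn : ¬IsSquare n) :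
    √n • (xSeq16 n - ((2 : ℝ), (1 : ℝ))) = (√n)⁻¹ • ((1 : ℝ), (3 : ℝ)) := by
  have hdiv (c : ℝ) : √n * (c / n) = (√n)⁻¹ * c := by
    rw [mul_div_left_comm, Real.sqrt_div_self', one_div, mul_comm]
  simp only [xSeq16, if_neg hn, Prod.mk_sub_mk, Prod.smul_mk, smul_eq_mul, add_sub_cancel_left,
    hdiv, one_div, ← hdiv 1]

lemma two_le_norm_xSeq16 (n : ℕ) : 2 ≤ ‖xSeq16 n‖ := by
  refine le_trans ?_ (norm_fst_le _)
  unfold xSeq16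
  split_ifs
  · norm_num
  · rw [Real.norm_eq_abs]
    exact le_trans (le_add_of_nonneg_right (by positivity)) (le_abs_self _)

lemma tendsto_norm_smul_xSeq16 {lam : ℝ} (hlam : 0 < lam) :
    Tendsto (fun n : ℕ => ‖(lam * √n) • xSeq16 n‖) atTop atTop := by
  refine tendsto_atTop_mono (fun n => ?_)
    ((Real.tendsto_sqrt_atTop.comp tendsto_natCast_atTop_atTop).const_mul_atTop
      (by positivity : 0 < lam * 2))
  rw [norm_smul, Real.norm_of_nonneg (by positivity), Function.comp_apply, mul_right_comm]
  exact mul_le_mul_of_nonneg_left (two_le_norm_xSeq16 n) (by positivity)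

/-- In ℝ² with the summability ideal and weights `t n = √n`:
(i) for every neighborhood `V` of zero and every `μ > 0`, the point `(2, 1)` is a rough
weighted `I`-τ-limit point of the sequence with degree of roughness `μ • V` (so the rough
weighted limit set is nonempty); but (ii) the sequence is not weighted `I`-τ-bounded. -/
theorem wLimSet_nonempty_but_not_bounded_example6 :
    (∀ V ∈ 𝓝 (0 : ℝ × ℝ), ∀ μ : ℝ, 0 < μ →
      ∀ U ∈ 𝓝 (0 : ℝ × ℝ),
        {n : ℕ | Real.sqrt n • (xSeq16 n - ((2 : ℝ), (1 : ℝ))) ∉ μ • V + U}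
          ∈ summabilityIdeal) ∧
    (∃ U ∈ 𝓝 (0 : ℝ × ℝ), ∀ lam : ℝ, 0 < lam →
        {n : ℕ | (lam * Real.sqrt n) • xSeq16 n ∉ U} ∉ summabilityIdeal) := by
  refine ⟨fun V hV μ _ U hU => ?_, ⟨Metric.ball 0 1, Metric.ball_mem_nhds _ one_pos,
    fun lam hlam => notMem_summabilityIdeal_of_finite_compl ?_⟩⟩
  · have hfar := (tendsto_inv_sqrt_smul ((1 : ℝ), (3 : ℝ))).finite_setOf_notMem hU
    refine mem_summabilityIdeal_of_subset (fun n hn => ?_)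
      (union_mem_summabilityIdeal setOf_isSquare_mem_summabilityIdeal hfar.mem_summabilityIdeal)
    by_contra! hmem
    simp only [mem_union, mem_ofPred_eq, not_or, not_not] at hmem
    apply hn
    rw [sqrt_smul_xSeq16_sub_of_not_isSquare hmem.1]
    exact subset_add_right U (zero_mem_smul_set (mem_of_mem_nhds hV)) hmem.2
  · rw [compl_ofPred, ← eventually_cofinite, Nat.cofinite_eq_atTop]
    filter_upwards [(tendsto_norm_smul_xSeq16 hlam).eventually_ge_atTop 1] with n hn
    rwa [Metric.mem_ball, dist_zero_right, not_lt]
end
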